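/- In the six-symbol bosonic Weyl system realizing the fields β(z), β*(z), ε_1(z), ε_1*(z), ε_2(z), ε_2*(z), with x_0⁺(m) := ½(:β*e*:)(m) and x_1⁺(m) := √−1·(:ef*:)(m), the quadratic Serre relation holds in mode form: for all k_1, k_2, l ∈ ℤ, [x_0⁺(k_1), [x_0⁺(k_2), x_1⁺(l)]] = 0, where [A,B] = AB − BA. (This is the coefficientwise form of the relation [x_0^+(z_1), [x_0^+(z_2), x_1^+(w)]] = 0 verified in the proof of Theorem 3.5.) -/

import Mathlib

noncomputable section

/-- A *bosonic Weyl system* over a set `S` of symbols with pairing `pair : S → S → ℂ`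
on a complex vector space `W`: a family of operators `op u k` (`u ∈ S`, `k ∈ ℤ`)
such that `[op u k, op v l] = ⟨u,v⟩ δ_{k+l,0} id`. -/
def IsBosonicWeylSystem {S W : Type*} [AddCommGroup W] [Module ℂ W]
    (pair : S → S → ℂ) (op : S → ℤ → Module.End ℂ W) : Prop :=
  ∀ u v : S, ∀ k l : ℤ,
    op u k * op v l - op v l * op u k =
      if k + l = 0 then pair u v • (1 : Module.End ℂ W) else 0

/-- A family of operators is *locally annihilating* if for every vector `w` and
every symbol `u`, `op u k w = 0` for all sufficiently large `k`. -/
def LocallyAnnihilating {S W : Type*} [AddCommGroup W] [Module ℂ W]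
    (op : S → ℤ → Module.End ℂ W) : Prop :=
  ∀ (w : W) (u : S), ∃ K : ℤ, ∀ k : ℤ, K ≤ k → op u k w = 0

/-- The normally ordered quadratic mode
`(:uv:)(m) = Σ_{j<0} u(j)v(m-j) + Σ_{j≥0} v(m-j)u(j)` applied to a vector `w`;
on a locally annihilating system all but finitely many summands vanish, so the
`finsum` computes the intended (finite) sum. -/
def noMode {S W : Type*} [AddCommGroup W] [Module ℂ W]
    (op : S → ℤ → Module.End ℂ W) (u v : S) (m : ℤ) (w : W) : W :=
  ∑ᶠ j : ℤ, if j < 0 then op u j (op v (m - j) w) else op v (m - j) (op u j w)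

end

/-- The six symbols `β, β*, ε₁, ε₁*, ε₂, ε₂*`: the symbol `(i, false)` is the plain
symbol (`0 = β`, `1 = ε₁ = e`, `2 = ε₂ = f`) and `(i, true)` the starred one. -/
abbrev WSym6 : Type := Fin 3 × Bool

/-- The Gram values `g(β,β) = g(β,e) = g(e,β) = g(e,e) = g(f,f) = 1`, `g(β,f) = g(e,f) = 0`. -/
noncomputable def gram6 : Fin 3 → Fin 3 → ℂ := !![1, 1, 0; 1, 1, 0; 0, 0, 1]

/-- The pairing `⟨u, v*⟩ = -g(u,v)`, `⟨u*, v⟩ = g(u,v)`, `⟨u,v⟩ = ⟨u*,v*⟩ = 0`. -/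
noncomputable def pair6 : WSym6 → WSym6 → ℂ
  | (i, false), (j, true) => -gram6 i j
  | (i, true), (j, false) => gram6 i j
  | _, _ => 0

section
variable {W : Type*} [AddCommGroup W] [Module ℂ W] (op : WSym6 → ℤ → Module.End ℂ W)

/-- `x₀⁺(m) = ½ (:β*e*:)(m)` (applied to a vector). -/
noncomputable def xZeroPlus (m : ℤ) (w : W) : W :=
  (1 / 2 : ℂ) • noMode op (0, true) (1, true) m w

/-- `x₀⁻(m) = ½ (:βe:)(m)` (applied to a vector). -/
noncomputable def xZeroMinus (m : ℤ) (w : W) : W :=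
  (1 / 2 : ℂ) • noMode op (0, false) (1, false) m w

/-- `x₁⁺(m) = √-1 (:ef*:)(m)` (applied to a vector). -/
noncomputable def xOnePlus (m : ℤ) (w : W) : W :=
  Complex.I • noMode op (1, false) (2, true) m w

/-- `α₀(m) = -½[(:ee*:)(m) + (:eβ*:)(m) + (:βe*:)(m) + (:ββ*:)(m)]` (applied to a vector). -/
noncomputable def alZero (m : ℤ) (w : W) : W :=
  (-(1 / 2) : ℂ) • (noMode op (1, false) (1, true) m w + noMode op (1, false) (0, true) m w +
    noMode op (0, false) (1, true) m w + noMode op (0, false) (0, true) m w)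

end

/-- The commutator `[A, B] = AB - BA` of two (pointwise-defined) operators. -/
def brkt {W : Type*} [AddCommGroup W] (A B : W → W) : W → W := fun w => A (B w) - B (A w)


/-! Both `x₀⁺` and the commutator `[x₀⁺(k), x₁⁺(l)]` turn out to be built from starred fields
only. For normally ordered quadratics with `⟨u,v⟩ = ⟨s,t⟩ = ⟨u,t⟩ = ⟨v,t⟩ = 0` only the
contractions of `u` and `v` with `s` survive, giving
`[:uv:(m), :st:(n)] = ⟨v,s⟩ :ut:(m+n) + ⟨u,s⟩ :vt:(m+n)`.
Applied to `[:β*e*:(k), :ef*:(l)]` this gives `:β*f*:(k+l) + :e*f*:(k+l)`; applied once more with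
`s = β*` or `s = e*` every pairing vanishes, since starred symbols pair trivially. -/

open Function

attribute [local instance] LieRing.ofAssociativeRing

section Finsum
variable {α M : Type*} [DecidableEq α] [AddCommMonoid M]

lemma hasFiniteSupport_ite_eq (a : α) (f : α → M) :
    HasFiniteSupport fun j => if j = a then f j else 0 :=
  (Set.finite_singleton a).subset fun _ hj => by_contra fun h => hj (if_neg h)

lemma finsum_ite_eq_self (a : α) (f : α → M) : ∑ᶠ j, (if j = a then f j else 0) = f a := by
  rw [finsum_eq_single _ a fun _ hj => if_neg hj, if_pos rfl]

end Finsum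

lemma brkt_coe {W : Type*} [AddCommGroup W] [Module ℂ W] (A B : Module.End ℂ W) :
    brkt ⇑A ⇑B = ⇑⁅A, B⁆ :=
  rfl

section

variable {S W : Type*} [AddCommGroup W] [Module ℂ W] {pair : S → S → ℂ}
  {op : S → ℤ → Module.End ℂ W}

namespace LocallyAnnihilating

lemma hasFiniteSupport_noMode (hA : LocallyAnnihilating op) (u v : S) (m : ℤ) (w : W) :
    HasFiniteSupport fun j : ℤ =>
      if j < 0 then op u j (op v (m - j) w) else op v (m - j) (op u j w) := by
  obtain ⟨K, hK⟩ := hA w u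
  obtain ⟨K', hK'⟩ := hA w v
  refine (Set.finite_Icc (min (m - K') 0) (max K 0)).subset fun j hj => ?_
  rw [mem_support] at hj
  split_ifs at hj
  · have : m - j < K' := by_contra fun h => hj (by rw [hK' _ (not_lt.1 h), map_zero])
    constructor <;> omega
  · have : j < K := by_contra fun h => hj (by rw [hK _ (not_lt.1 h), map_zero])
    constructor <;> omega

noncomputable def noModeEnd (hA : LocallyAnnihilating op) (u v : S) (m : ℤ) :
    Module.End ℂ W where
  toFun := noMode op u v m
  map_add' w w' := by
    rw [noMode, noMode, noMode, ← finsum_add_distrib (hA.hasFiniteSupport_noMode u v m w)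
      (hA.hasFiniteSupport_noMode u v m w')]
    refine finsum_congr fun j => ?_
    split_ifs <;> simp only [map_add]
  map_smul' c w := by
    rw [noMode, noMode, RingHom.id_apply, smul_finsum' c (hA.hasFiniteSupport_noMode u v m w)]
    refine finsum_congr fun j => ?_
    split_ifs <;> simp only [map_smul]

@[simp]
lemma coe_noModeEnd (hA : LocallyAnnihilating op) (u v : S) (m : ℤ) :
    ⇑(hA.noModeEnd u v m) = noMode op u v m :=
  rfl

end LocallyAnnihilating

namespace IsBosonicWeylSystem

lemma op_apply_op (hW : IsBosonicWeylSystem pair op) (u v : S) (k l : ℤ) (w : W) :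
    op u k (op v l w) = op v l (op u k w) + if k + l = 0 then pair u v • w else 0 := by
  have h := congrArg (· w) (hW u v k l)
  split_ifs at h ⊢ <;> simpa [sub_eq_iff_eq_add'] using h

variable {u v s t : S}

lemma op_apply_op_comm (hW : IsBosonicWeylSystem pair op) (huv : pair u v = 0)
    (k l : ℤ) (w : W) : op u k (op v l w) = op v l (op u k w) := by
  rw [hW.op_apply_op, huv, zero_smul, ite_self, add_zero]

lemma noMode_eq_finsum (hW : IsBosonicWeylSystem pair op) (huv : pair u v = 0)
    (m : ℤ) (w : W) : noMode op u v m w = ∑ᶠ j : ℤ, op u j (op v (m - j) w) := by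
  refine finsum_congr fun j => ?_
  split_ifs
  · rfl
  · exact (hW.op_apply_op_comm huv j (m - j) w).symm

lemma noMode_eq_finsum_add (hW : IsBosonicWeylSystem pair op) (huv : pair u v = 0)
    (c d : ℤ) (w : W) : noMode op u v (c + d) w = ∑ᶠ j : ℤ, op u (c + j) (op v (d - j) w) := by
  rw [hW.noMode_eq_finsum huv, ← finsum_comp_equiv (Equiv.addLeft c)]
  simp only [Equiv.coe_addLeft, show ∀ j, c + d - (c + j) = d - j from fun j => by ring]

lemma hasFiniteSupport_op_op (hW : IsBosonicWeylSystem pair op) (hA : LocallyAnnihilating op)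
    (huv : pair u v = 0) (c d : ℤ) (w : W) :
    HasFiniteSupport fun j : ℤ => op u (c + j) (op v (d - j) w) := by
  convert (hA.hasFiniteSupport_noMode u v (c + d) w).comp_of_injective (add_right_injective c)
    using 1
  funext j
  rw [comp_apply, show c + d - (c + j) = d - j by ring]
  split_ifs
  · rfl
  · exact hW.op_apply_op_comm huv _ _ w

lemma hasFiniteSupport_op_op_sub (hW : IsBosonicWeylSystem pair op)
    (hA : LocallyAnnihilating op) (huv : pair u v = 0) (d : ℤ) (w : W) :
    HasFiniteSupport fun j : ℤ => op u j (op v (d - j) w) := by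
  simpa using hW.hasFiniteSupport_op_op hA huv 0 d w

lemma noMode_op (hW : IsBosonicWeylSystem pair op) (hA : LocallyAnnihilating op)
    (huv : pair u v = 0) (s : S) (m c : ℤ) (w : W) :
    noMode op u v m (op s c w) =
      op s c (noMode op u v m w) + pair v s • op u (m + c) w + pair u s • op v (m + c) w := by
  have step (j : ℤ) : op u j (op v (m - j) (op s c w)) = op s c (op u j (op v (m - j) w)) +
      (if j = m + c then pair v s • op u j w else 0) +
      (if j = -c then pair u s • op v (m - j) w else 0) := by
    rw [hW.op_apply_op v s, map_add, hW.op_apply_op u s]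
    simp only [show m - j + c = 0 ↔ j = m + c by omega, show j + c = 0 ↔ j = -c by omega]
    split_ifs <;> simp only [map_smul, map_zero] <;> abel
  have hfin := hW.hasFiniteSupport_op_op_sub hA huv m w
  have hfin_s := hfin.fun_comp (map_zero (op s c))
  rw [hW.noMode_eq_finsum huv, hW.noMode_eq_finsum huv, finsum_congr step,
    finsum_add_distrib (hfin_s.fun_add (hasFiniteSupport_ite_eq _ _))
      (hasFiniteSupport_ite_eq _ _),
    finsum_add_distrib hfin_s (hasFiniteSupport_ite_eq _ _), finsum_ite_eq_self,
    finsum_ite_eq_self, sub_neg_eq_add, map_finsum _ hfin]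

lemma lie_noModeEnd (hW : IsBosonicWeylSystem pair op) (hA : LocallyAnnihilating op)
    (huv : pair u v = 0) (hst : pair s t = 0) (hut : pair u t = 0) (hvt : pair v t = 0)
    (m n : ℤ) :
    ⁅hA.noModeEnd u v m, hA.noModeEnd s t n⁆ =
      pair v s • hA.noModeEnd u t (m + n) + pair u s • hA.noModeEnd v t (m + n) := by
  ext w
  set N := hA.noModeEnd u v m
  have step (j : ℤ) : N (op s j (op t (n - j) w)) = op s j (op t (n - j) (N w)) +
      (pair v s • op u (m + j) (op t (n - j) w) + pair u s • op v (m + j) (op t (n - j) w)) := by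
    simp only [N, LocallyAnnihilating.coe_noModeEnd]
    rw [hW.noMode_op hA huv, hW.noMode_op hA huv, hut, hvt, zero_smul, zero_smul, add_zero,
      add_zero, add_assoc]
  have hfin_st := hW.hasFiniteSupport_op_op_sub hA hst n
  have hfin_ut := hW.hasFiniteSupport_op_op hA hut m n w
  have hfin_vt := hW.hasFiniteSupport_op_op hA hvt m n w
  simp only [Ring.lie_def, LinearMap.sub_apply, Module.End.mul_apply, LinearMap.add_apply,
    LinearMap.smul_apply, LocallyAnnihilating.coe_noModeEnd]
  rw [hW.noMode_eq_finsum hst n w, hW.noMode_eq_finsum hst n (N w), map_finsum N (hfin_st w),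
    finsum_congr step, finsum_add_distrib (hfin_st (N w))
      ((hfin_ut.fun_comp (smul_zero _)).fun_add (hfin_vt.fun_comp (smul_zero _))),
    add_sub_cancel_left,
    finsum_add_distrib (hfin_ut.fun_comp (smul_zero _)) (hfin_vt.fun_comp (smul_zero _)),
    ← smul_finsum' _ hfin_ut, ← smul_finsum' _ hfin_vt,
    hW.noMode_eq_finsum_add hut, hW.noMode_eq_finsum_add hvt]

end IsBosonicWeylSystem

end

/-- in the six-symbol bosonic Weyl system, the quadratic Serre relation
`[x₀⁺(k₁), [x₀⁺(k₂), x₁⁺(l)]] = 0` holds in mode form. -/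
theorem serre_quadratic {W : Type*} [AddCommGroup W] [Module ℂ W]
    (op : WSym6 → ℤ → Module.End ℂ W)
    (hW : IsBosonicWeylSystem pair6 op) (hA : LocallyAnnihilating op)
    (k₁ k₂ l : ℤ) (w : W) :
    brkt (xZeroPlus op k₁) (brkt (xZeroPlus op k₂) (xOnePlus op l)) w = 0 := by
  have hx₀ (k : ℤ) : xZeroPlus op k = ⇑((1 / 2 : ℂ) • hA.noModeEnd (0, true) (1, true) k) := rfl
  have hx₁ : xOnePlus op l = ⇑(Complex.I • hA.noModeEnd (1, false) (2, true) l) := rfl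
  have hstar (i j : Fin 3) : pair6 (i, true) (j, true) = 0 := rfl
  have hef : pair6 (1, false) (2, true) = 0 := by simp [pair6, gram6]
  rw [hx₀, hx₀, hx₁, brkt_coe, brkt_coe]
  simp only [lie_smul, smul_lie, lie_add,
    hW.lie_noModeEnd hA (hstar 0 1) hef (hstar 0 2) (hstar 1 2),
    hW.lie_noModeEnd hA (hstar 0 1) (hstar _ 2) (hstar 0 2) (hstar 1 2), hstar, zero_smul,
    add_zero, smul_zero, LinearMap.zero_apply]
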